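/- arXiv:2202.05739 — 12 statements merged into one kernel-verified Lean document; each statement's English description precedes it below -/
import Mathlib

section
/- If an R-module M satisfies the dual of strong Property A (i.e., for any a₁,...,aₙ ∈ W_R(M) there exists a completely irreducible submodule L of M with aᵢM ⊆ L ≠ M for all i), then W_R(M) is an ideal of R (i.e., M is secondal). -/
open Pointwise

/-! Since `(a + b)M ⊆ aM + bM` and `(ca)M ⊆ aM`, the set `W_R(M)` is an ideal as soon as `M ≠ 0`
and `aM + bM ≠ M` for all `a, b ∈ W_R(M)`; both follow from the existence of a proper submodule
containing `a₁M, …, aₙM` (for `n = 0` and `n = 2`). -/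

/-- A proper submodule `L` is completely irreducible if whenever `L` is the intersection of a
family of submodules, `L` equals one of them. -/
def CompletelyIrreducible {R M : Type*} [CommRing R] [AddCommGroup M] [Module R M]
    (L : Submodule R M) : Prop :=
  L ≠ ⊤ ∧ ∀ s : Set (Submodule R M), L = sInf s → L ∈ s

namespace Submodule

variable {R M : Type*} [CommRing R] [AddCommGroup M] [Module R M]

theorem add_smul_top_le (a b : R) :
    (a + b) • (⊤ : Submodule R M) ≤ a • ⊤ ⊔ b • ⊤ := by
  simp_rw [← ideal_span_singleton_smul, ← sup_smul]
  refine smul_mono_left (Ideal.span_singleton_le_iff_mem _ |>.mpr ?_)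
  exact add_mem (mem_sup_left (Ideal.mem_span_singleton_self a))
    (mem_sup_right (Ideal.mem_span_singleton_self b))

theorem mul_smul_top_le (c a : R) : (c * a) • (⊤ : Submodule R M) ≤ a • ⊤ := by
  simp_rw [← ideal_span_singleton_smul]
  exact smul_mono_left (Ideal.span_singleton_le_span_singleton.mpr (dvd_mul_left a c))

theorem exists_ideal_eq_setOf_smul_top_ne_top [Nontrivial M]
    (hsup : ∀ a b : R, a • (⊤ : Submodule R M) ≠ ⊤ → b • (⊤ : Submodule R M) ≠ ⊤ →
      a • (⊤ : Submodule R M) ⊔ b • ⊤ ≠ ⊤) :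
    ∃ I : Ideal R, (I : Set R) = {r : R | r • (⊤ : Submodule R M) ≠ ⊤} :=
  ⟨{ carrier := {r : R | r • (⊤ : Submodule R M) ≠ ⊤}
     zero_mem' := by simp [zero_smul]
     add_mem' := fun ha hb => ne_top_of_le_ne_top (hsup _ _ ha hb) (add_smul_top_le _ _)
     smul_mem' := fun c _ ha => ne_top_of_le_ne_top ha (mul_smul_top_le c _) }, rfl⟩

end Submodule

/-- If `M` satisfies the dual of strong Property A, then `W_R(M)` is an ideal of `R`. -/
theorem stmt0 {R M : Type*} [CommRing R] [AddCommGroup M] [Module R M]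
    (h : ∀ (n : ℕ) (a : Fin n → R), (∀ i, a i • (⊤ : Submodule R M) ≠ ⊤) →
      ∃ L : Submodule R M, CompletelyIrreducible L ∧ ∀ i, a i • (⊤ : Submodule R M) ≤ L) :
    ∃ I : Ideal R, (I : Set R) = {r : R | r • (⊤ : Submodule R M) ≠ ⊤} := by
  obtain ⟨L, ⟨hL, -⟩, -⟩ := h 0 ![] fun i => i.elim0
  have : Nontrivial M := (Submodule.nontrivial_iff R).mp (nontrivial_of_ne L ⊤ hL)
  refine Submodule.exists_ideal_eq_setOf_smul_top_ne_top fun a b ha hb => ?_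
  obtain ⟨L, ⟨hL, -⟩, hle⟩ := h 2 ![a, b] (Fin.forall_fin_two.mpr ⟨ha, hb⟩)
  exact ne_top_of_le_ne_top hL (sup_le (hle 0) (hle 1))
end

section
/- If R is a principal ideal domain and M is a secondal R-module (W_R(M) is an ideal of R), then M satisfies the dual of strong Property A: for any a₁,...,aₙ ∈ W_R(M) there exists a completely irreducible submodule L of M with aᵢM ⊆ L ≠ M for all i. -/
open Pointwise

theorem exists_completelyIrreducible {R M : Type*} [CommRing R] [AddCommGroup M] [Module R M]
    (N : Submodule R M) (hN : N ≠ ⊤) :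
    ∃ L : Submodule R M, CompletelyIrreducible L ∧ N ≤ L := by
  obtain ⟨x, hx⟩ : ∃ x, x ∉ N := by
    by_contra hcon
    push_neg at hcon
    exact hN (Submodule.eq_top_iff'.2 hcon)
  obtain ⟨L, hNL, hL⟩ := zorn_le_nonempty₀ {K : Submodule R M | x ∉ K}
    (fun c hc hchain y hy => by
      refine ⟨sSup c, ?_, fun z hz => le_sSup hz⟩
      intro hmem
      rw [Submodule.mem_sSup_of_directed ⟨y, hy⟩ hchain.directedOn] at hmem
      obtain ⟨K, hK, hxK⟩ := hmem
      exact hc hK hxK) N hx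
  refine ⟨L, ⟨fun ht => hL.prop (ht ▸ Submodule.mem_top), fun s hs => ?_⟩, hNL⟩
  by_contra hLs
  apply hL.prop
  rw [hs]
  rw [Submodule.mem_sInf]
  intro K hK
  have hLK : L < K := lt_of_le_of_ne (hs ▸ sInf_le hK) (fun e => hLs (e ▸ hK))
  by_contra hxK
  exact hLK.ne (le_antisymm hLK.le (hL.le_of_ge hxK hLK.le))

/-- If `R` is a PID and `M` is a secondal `R`-module (i.e. `W_R(M)` is an ideal of `R`),
then `M` satisfies the dual of strong Property A. -/
theorem stmt1 {R M : Type*} [CommRing R] [IsDomain R] [IsPrincipalIdealRing R]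
    [AddCommGroup M] [Module R M]
    (h : ∃ I : Ideal R, (I : Set R) = {r : R | r • (⊤ : Submodule R M) ≠ ⊤}) :
    ∀ (n : ℕ) (a : Fin n → R), (∀ i, a i • (⊤ : Submodule R M) ≠ ⊤) →
      ∃ L : Submodule R M, CompletelyIrreducible L ∧ ∀ i, a i • (⊤ : Submodule R M) ≤ L := by
  obtain ⟨I, hI⟩ := h
  intro n a ha
  obtain ⟨d, hd⟩ := (IsPrincipalIdealRing.principal I).principal
  have hdmem : d ∈ I := hd ▸ Ideal.mem_span_singleton_self d
  have hdW : d • (⊤ : Submodule R M) ≠ ⊤ := by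
    have : d ∈ (I : Set R) := hdmem
    rwa [hI] at this
  obtain ⟨L, hL, hdL⟩ := exists_completelyIrreducible (d • (⊤ : Submodule R M)) hdW
  refine ⟨L, hL, fun i => le_trans ?_ hdL⟩
  have hai : a i ∈ I := by rw [← SetLike.mem_coe, hI]; exact ha i
  rw [hd, Submodule.mem_span_singleton] at hai
  obtain ⟨c, hc⟩ := hai
  intro z hz
  rw [← SetLike.mem_coe, Submodule.coe_pointwise_smul, Set.mem_smul_set] at hz ⊢
  obtain ⟨m, -, rfl⟩ := hz
  exact ⟨c • m, Submodule.mem_top, by rw [← hc, smul_smul, smul_eq_mul, mul_comm]⟩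
end

section
/- Let f : R → R' be a ring homomorphism, M an R'-module viewed as an R-module via f, such that for each finitely generated ideal I of R, f(I)R' = {f(i)r' : i ∈ I, r' ∈ R'}. If M satisfies the dual of Property A as an R'-module, then M satisfies the dual of Property A as an R-module. -/
open Pointwise

/-- Let `f : R → R'` be a ring homomorphism and `M` an `R'`-module viewed as an `R`-module via
`r • m = f r • m`.  Suppose that for each finitely generated ideal `I` of `R`,
`f(I)R' = {f(i)r' : i ∈ I, r' ∈ R'}`.  If `M` satisfies the dual of Property A as an
`R'`-module, then `M` satisfies the dual of Property A as an `R`-module. -/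
theorem stmt2 {R R' M : Type*} [CommRing R] [CommRing R'] (f : R →+* R')
    [AddCommGroup M] [Module R' M] [Module R M]
    (hcomp : ∀ (r : R) (m : M), r • m = f r • m)
    (hf : ∀ I : Ideal R, I.FG →
      ((I.map f : Ideal R') : Set R') = {y : R' | ∃ i ∈ I, ∃ r' : R', y = f i * r'})
    (hA' : ∀ J : Ideal R', J.FG → (∀ a ∈ J, a • (⊤ : Submodule R' M) ≠ ⊤) →
      J • (⊤ : Submodule R' M) ≠ ⊤) :
    ∀ I : Ideal R, I.FG → (∀ a ∈ I, a • (⊤ : Submodule R M) ≠ ⊤) →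
      I • (⊤ : Submodule R M) ≠ ⊤ := by
  intro I hFG hI hIM
  apply hA' (I.map f) (Ideal.FG.map hFG f)
  · intro a ha haM
    have hmem : a ∈ ({y : R' | ∃ i ∈ I, ∃ r' : R', y = f i * r'} : Set R') := by
      rw [← hf I hFG]; exact ha
    obtain ⟨i, hi, r', rfl⟩ := hmem
    apply hI i hi
    rw [eq_top_iff]
    intro m _
    have hm : m ∈ (f i * r') • (⊤ : Submodule R' M) := by rw [haM]; trivial
    rw [← SetLike.mem_coe, Submodule.coe_pointwise_smul] at hm
    obtain ⟨x, -, hx⟩ := hm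
    rw [← SetLike.mem_coe, Submodule.coe_pointwise_smul]
    refine ⟨r' • x, trivial, ?_⟩
    simp only []
    rw [hcomp, smul_smul, ← hx]
  · rw [eq_top_iff]
    intro m _
    have hm : m ∈ I • (⊤ : Submodule R M) := by rw [hIM]; trivial
    refine Submodule.smul_induction_on hm ?_ ?_
    · intro r hr n _
      rw [hcomp]
      exact Submodule.smul_mem_smul (Ideal.mem_map_of_mem f hr) Submodule.mem_top
    · intro x y hx hy
      exact Submodule.add_mem _ hx hy
end

section
/- Let f : R → R' be a ring homomorphism and M an R'-module viewed as an R-module via f. Suppose every finitely generated ideal J of R' has the form J = f(I)R' for some finitely generated ideal I of R. If M satisfies the dual of Property A as an R-module, then M satisfies the dual of Property A as an R'-module. -/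
open Pointwise

/-- Let `f : R → R'` be a ring homomorphism and `M` an `R'`-module viewed as an `R`-module via
`r • m = f r • m`.  Suppose every finitely generated ideal `J` of `R'` has the form
`J = f(I)R'` for some finitely generated ideal `I` of `R`.  If `M` satisfies the dual of
Property A as an `R`-module, then `M` satisfies the dual of Property A as an `R'`-module. -/
theorem stmt3 {R R' M : Type*} [CommRing R] [CommRing R'] (f : R →+* R')
    [AddCommGroup M] [Module R' M] [Module R M]
    (hcomp : ∀ (r : R) (m : M), r • m = f r • m)
    (hf : ∀ J : Ideal R', J.FG → ∃ I : Ideal R, I.FG ∧ J = I.map f)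
    (hA : ∀ I : Ideal R, I.FG → (∀ a ∈ I, a • (⊤ : Submodule R M) ≠ ⊤) →
      I • (⊤ : Submodule R M) ≠ ⊤) :
    ∀ J : Ideal R', J.FG → (∀ a ∈ J, a • (⊤ : Submodule R' M) ≠ ⊤) →
      J • (⊤ : Submodule R' M) ≠ ⊤ := by
  intro J hJfg hJ
  obtain ⟨I, hIfg, rfl⟩ := hf J hJfg
  intro htop
  -- elementwise hypothesis for I over R
  have helt : ∀ a ∈ I, a • (⊤ : Submodule R M) ≠ ⊤ := by
    intro a ha h
    apply hJ (f a) (Ideal.mem_map_of_mem f ha)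
    rw [Submodule.eq_top_iff']
    intro m
    have hm : m ∈ a • (⊤ : Submodule R M) := by rw [h]; exact Submodule.mem_top
    rw [← SetLike.mem_coe, Submodule.coe_pointwise_smul] at hm ⊢
    obtain ⟨n, _, rfl⟩ := hm
    exact ⟨n, Submodule.mem_top, (hcomp a n).symm⟩
  refine hA I hIfg helt ?_
  rw [Submodule.eq_top_iff']
  intro m
  have hm : m ∈ Ideal.map f I • (⊤ : Submodule R' M) := by rw [htop]; exact Submodule.mem_top
  have key : ∀ j ∈ Ideal.map f I, ∀ n : M, j • n ∈ I • (⊤ : Submodule R M) := by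
    intro j hj
    rw [Ideal.map] at hj
    refine Submodule.span_induction ?_ ?_ ?_ ?_ hj
    · rintro x ⟨a, ha, rfl⟩ n
      rw [← hcomp]
      exact Submodule.smul_mem_smul ha Submodule.mem_top
    · intro n; rw [zero_smul]; exact Submodule.zero_mem _
    · intro x y _ _ hx hy n
      rw [add_smul]; exact Submodule.add_mem _ (hx n) (hy n)
    · intro r x _ hx n
      rw [smul_eq_mul, mul_comm, mul_smul]
      exact hx (r • n)
  exact Submodule.smul_induction_on hm (fun j hj n _ => key j hj n)
    (fun x y hx hy => Submodule.add_mem _ hx hy)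
end

section
/- Let S be a multiplicatively closed subset of R, I an ideal of R, and M an R-module. If S⁻¹I ⊆ W_{S⁻¹R}(S⁻¹M), then I ⊆ W_R(M). -/
open Pointwise

/-- If `S⁻¹I ⊆ W_{S⁻¹R}(S⁻¹M)`, then `I ⊆ W_R(M)`. -/
theorem stmt5 {R M : Type*} [CommRing R] [AddCommGroup M] [Module R M]
    (S : Submonoid R) (I : Ideal R)
    (h : ∀ x ∈ I.map (algebraMap R (Localization S)),
      x • (⊤ : Submodule (Localization S) (LocalizedModule S M)) ≠ ⊤) :
    ∀ r ∈ I, r • (⊤ : Submodule R M) ≠ ⊤ := by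
  intro r hr hrM
  apply h (algebraMap R (Localization S) r) (Ideal.mem_map_of_mem _ hr)
  rw [eq_top_iff]
  rintro x -
  induction x using LocalizedModule.induction_on with
  | h m s =>
    have hm : m ∈ r • (⊤ : Submodule R M) := hrM.symm ▸ Submodule.mem_top
    obtain ⟨m', -, rfl⟩ := hm
    refine ⟨LocalizedModule.mk m' s, Submodule.mem_top, ?_⟩
    simp [LocalizedModule.smul'_mk, Localization.smul_mk,
      algebraMap_smul, LocalizedModule.mk_smul_mk]
end

section
/- Let S be a multiplicatively closed subset of R, I an ideal of R, and M an R-module. If Z_R(M) ∩ S = ∅, W_R(M) ∩ S = ∅, and I ⊆ W_R(M), then S⁻¹I ⊆ W_{S⁻¹R}(S⁻¹M). -/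
open Pointwise

open Pointwise in
lemma mem_smul_top_iff' {A N : Type*} [CommRing A] [AddCommGroup N] [Module A N]
    (r : A) (a : N) : a ∈ r • (⊤ : Submodule A N) ↔ ∃ b : N, r • b = a := by
  rw [← SetLike.mem_coe, Submodule.coe_pointwise_smul, Set.mem_smul_set]
  simp

/-- If `Z_R(M) ∩ S = ∅`, `W_R(M) ∩ S = ∅` and `I ⊆ W_R(M)`, then
`S⁻¹I ⊆ W_{S⁻¹R}(S⁻¹M)`. -/
theorem stmt6 {R M : Type*} [CommRing R] [AddCommGroup M] [Module R M]
    (S : Submonoid R) (I : Ideal R)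
    (hZ : ∀ s ∈ S, ¬ ∃ m : M, m ≠ 0 ∧ s • m = 0)
    (hW : ∀ s ∈ S, s • (⊤ : Submodule R M) = ⊤)
    (hI : ∀ r ∈ I, r • (⊤ : Submodule R M) ≠ ⊤) :
    ∀ x ∈ I.map (algebraMap R (Localization S)),
      x • (⊤ : Submodule (Localization S) (LocalizedModule S M)) ≠ ⊤ := by
  -- injectivity of multiplication by elements of S on M
  have hinj : ∀ s ∈ S, ∀ a b : M, s • a = s • b → a = b := by
    intro s hs a b hab
    by_contra hne
    exact hZ s hs ⟨a - b, sub_ne_zero.mpr hne, by rw [smul_sub, hab, sub_self]⟩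
  -- surjectivity of multiplication by elements of S on M
  have hsurj : ∀ s ∈ S, ∀ a : M, ∃ b : M, s • b = a := by
    intro s hs a
    have : a ∈ s • (⊤ : Submodule R M) := (hW s hs).symm ▸ Submodule.mem_top
    exact (mem_smul_top_iff' _ _).mp this
  intro x hx hx'
  obtain ⟨⟨⟨r, hr⟩, s⟩, hrs⟩ :=
    (IsLocalization.mem_map_algebraMap_iff S (Localization S)).mp hx
  simp only at hrs
  -- x = Localization.mk r s
  have hxeq : x = Localization.mk r s := by
    have hu := IsLocalization.map_units (Localization S) s
    apply hu.mul_right_cancel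
    rw [hrs, ← Localization.mk_one_eq_algebraMap, ← Localization.mk_one_eq_algebraMap,
      Localization.mk_mul]
    simp [Localization.mk_eq_mk_iff, Localization.r_iff_exists]
    exact ⟨1, S.one_mem, by ring⟩
  -- get m ∉ r • M
  have hrW := hI r hr
  have : ∃ m : M, ¬ ∃ n : M, r • n = m := by
    by_contra h
    push_neg at h
    apply hrW
    ext a
    simp only [Submodule.mem_top, iff_true]
    obtain ⟨n, hn⟩ := h a
    exact (mem_smul_top_iff' _ _).mpr ⟨n, hn⟩
  obtain ⟨m, hm⟩ := this
  -- m/1 ∈ x • ⊤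
  have hmem : (LocalizedModule.mk m 1 : LocalizedModule S M) ∈
      x • (⊤ : Submodule (Localization S) (LocalizedModule S M)) := by
    rw [hx']; exact Submodule.mem_top
  obtain ⟨y, hy⟩ := (mem_smul_top_iff' _ _).mp hmem
  induction y using LocalizedModule.induction_on with
  | h n t =>
    rw [hxeq, LocalizedModule.mk_smul_mk] at hy
    rw [LocalizedModule.mk_eq] at hy
    obtain ⟨u, hu⟩ := hy
    -- hu : u • 1 • (r • n) = u • (s * t) • m
    simp only [one_smul, Submonoid.smul_def, smul_smul] at hu
    -- rewrite as element of S acting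
    have hc : ((u : R) * (s * t)) ∈ S := S.mul_mem u.2 (S.mul_mem s.2 t.2)
    obtain ⟨n', hn'⟩ := hsurj _ hc ((u : R) • n)
    apply hm
    refine ⟨n', hinj _ hc _ _ ?_⟩
    -- goal : (u * (s*t)) • (r • n') = (u * (s*t)) • m
    calc ((u : R) * ((s : R) * t)) • r • n' = r • ((u : R) * ((s : R) * t)) • n' := smul_comm _ _ _
      _ = r • (u : R) • n := by rw [hn']
      _ = (u : R) • r • n := smul_comm _ _ _
      _ = ((u : R) * ((s : R) * t)) • m := by
          rw [smul_smul, hu, Submonoid.coe_mul]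
end

section
/- Every finitely generated R-module M satisfies the dual of Property A: for every ideal I of R with I ⊆ W_R(M), IM ≠ M. -/
open Pointwise

/-- Every finitely generated `R`-module satisfies the dual of Property A; in fact for any ideal
`I ⊆ W_R(M)` we have `IM ≠ M`. -/
theorem stmt9 {R M : Type*} [CommRing R] [AddCommGroup M] [Module R M] [Module.Finite R M] :
    ∀ I : Ideal R, (∀ r ∈ I, r • (⊤ : Submodule R M) ≠ ⊤) →
      I • (⊤ : Submodule R M) ≠ ⊤ := by
  intro I hW hIM
  obtain ⟨r, hr, hr0⟩ := Submodule.exists_sub_one_mem_and_smul_eq_zero_of_fg_of_le_smul I ⊤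
    (Module.Finite.fg_top) hIM.ge
  apply hW (1 - r) (by simpa using I.neg_mem hr)
  rw [eq_top_iff]
  intro x _
  have hx : (1 - r) • x = x := by
    rw [sub_smul, one_smul, hr0 x trivial, sub_zero]
  exact hx ▸ Submodule.smul_mem_pointwise_smul x (1 - r) ⊤ trivial
end

section
/- Let M and M' be R-modules with W_R(M) ⊆ W_R(M'). If M' satisfies the dual of Property A, then M ⊕ M' satisfies the dual of Property A. Moreover W_R(M ⊕ M') = W_R(M) ∪ W_R(M'). -/
open Pointwise

private lemma smul_top_eq_top_iff {R M : Type*} [CommRing R] [AddCommGroup M] [Module R M]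
    (r : R) : r • (⊤ : Submodule R M) = ⊤ ↔ ∀ m : M, ∃ x : M, r • x = m := by
  constructor
  · intro h m
    have hm : m ∈ r • (⊤ : Submodule R M) := by rw [h]; exact Submodule.mem_top
    rw [← SetLike.mem_coe, Submodule.coe_pointwise_smul] at hm
    obtain ⟨x, -, hx⟩ := hm
    exact ⟨x, hx⟩
  · intro h
    rw [eq_top_iff]
    intro m _
    obtain ⟨x, hx⟩ := h m
    exact hx ▸ Submodule.smul_mem_pointwise_smul x r ⊤ Submodule.mem_top

private lemma smul_top_prod_iff {R M M' : Type*} [CommRing R] [AddCommGroup M] [Module R M]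
    [AddCommGroup M'] [Module R M'] (r : R) :
    r • (⊤ : Submodule R (M × M')) = ⊤ ↔
      (r • (⊤ : Submodule R M) = ⊤ ∧ r • (⊤ : Submodule R M') = ⊤) := by
  simp only [smul_top_eq_top_iff]
  constructor
  · intro h
    refine ⟨fun m => ?_, fun m' => ?_⟩
    · obtain ⟨⟨x, y⟩, hxy⟩ := h (m, 0)
      exact ⟨x, congrArg Prod.fst hxy⟩
    · obtain ⟨⟨x, y⟩, hxy⟩ := h (0, m')
      exact ⟨y, congrArg Prod.snd hxy⟩
  · rintro ⟨h1, h2⟩ ⟨m, m'⟩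
    obtain ⟨x, hx⟩ := h1 m
    obtain ⟨y, hy⟩ := h2 m'
    exact ⟨(x, y), Prod.ext hx hy⟩

/-- If `W_R(M) ⊆ W_R(M')` and `M'` satisfies the dual of Property A, then `M ⊕ M'` satisfies
the dual of Property A; moreover `W_R(M ⊕ M') = W_R(M) ∪ W_R(M')`. -/
theorem stmt10 {R M M' : Type*} [CommRing R] [AddCommGroup M] [Module R M]
    [AddCommGroup M'] [Module R M']
    (hW : {r : R | r • (⊤ : Submodule R M) ≠ ⊤} ⊆ {r : R | r • (⊤ : Submodule R M') ≠ ⊤})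
    (hA : ∀ I : Ideal R, I.FG → (∀ r ∈ I, r • (⊤ : Submodule R M') ≠ ⊤) →
      I • (⊤ : Submodule R M') ≠ ⊤) :
    ({r : R | r • (⊤ : Submodule R (M × M')) ≠ ⊤} =
      {r : R | r • (⊤ : Submodule R M) ≠ ⊤} ∪ {r : R | r • (⊤ : Submodule R M') ≠ ⊤}) ∧
    (∀ I : Ideal R, I.FG → (∀ r ∈ I, r • (⊤ : Submodule R (M × M')) ≠ ⊤) →
      I • (⊤ : Submodule R (M × M')) ≠ ⊤) := by
  have key : ∀ r : R, r • (⊤ : Submodule R (M × M')) ≠ ⊤ ↔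
      (r • (⊤ : Submodule R M) ≠ ⊤ ∨ r • (⊤ : Submodule R M') ≠ ⊤) := by
    intro r
    rw [Ne, smul_top_prod_iff, not_and_or]
  constructor
  · ext r
    simpa using key r
  · intro I hFG hI hcontra
    have hI' : ∀ r ∈ I, r • (⊤ : Submodule R M') ≠ ⊤ := by
      intro r hr
      rcases (key r).mp (hI r hr) with h | h
      · exact hW h
      · exact h
    apply hA I hFG hI'
    have hsnd : Submodule.map (LinearMap.snd R M M') (⊤ : Submodule R (M × M')) = ⊤ := by
      rw [Submodule.map_top, LinearMap.range_eq_top]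
      exact fun x => ⟨(0, x), rfl⟩
    calc I • (⊤ : Submodule R M') = I • Submodule.map (LinearMap.snd R M M') ⊤ := by rw [hsnd]
      _ = Submodule.map (LinearMap.snd R M M') (I • ⊤) := (Submodule.map_smul'' I ⊤ _).symm
      _ = ⊤ := by rw [hcontra, hsnd]
end

section
/- Let N be a small submodule of an R-module M. Then M satisfies the dual of Property A if and only if M/N satisfies the dual of Property A. Moreover W_R(M) = W_R(M/N). -/
open Pointwise

lemma aux11 {R M : Type*} [CommRing R] [AddCommGroup M] [Module R M]
    (N : Submodule R M) (hN : ∀ X : Submodule R M, X ⊔ N = ⊤ → X = ⊤)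
    (I : Ideal R) :
    I • (⊤ : Submodule R (M ⧸ N)) = ⊤ ↔ I • (⊤ : Submodule R M) = ⊤ := by
  have hmap : Submodule.map N.mkQ (I • (⊤ : Submodule R M)) = I • (⊤ : Submodule R (M ⧸ N)) := by
    rw [Submodule.map_smul'', Submodule.map_top, Submodule.range_mkQ]
  constructor
  · intro h
    apply hN
    rw [sup_comm, ← Submodule.map_mkQ_eq_top, hmap, h]
  · intro h
    rw [← hmap, h, Submodule.map_top, Submodule.range_mkQ]

/-- Let `N` be a small submodule of `M`.  Then `M` satisfies the dual of Property A iff `M/N`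
does; moreover `W_R(M) = W_R(M/N)`. -/
theorem stmt11 {R M : Type*} [CommRing R] [AddCommGroup M] [Module R M]
    (N : Submodule R M) (hN : ∀ X : Submodule R M, X ⊔ N = ⊤ → X = ⊤) :
    ({r : R | r • (⊤ : Submodule R M) ≠ ⊤} =
      {r : R | r • (⊤ : Submodule R (M ⧸ N)) ≠ ⊤}) ∧
    ((∀ I : Ideal R, I.FG → (∀ r ∈ I, r • (⊤ : Submodule R M) ≠ ⊤) →
        I • (⊤ : Submodule R M) ≠ ⊤) ↔
      (∀ I : Ideal R, I.FG → (∀ r ∈ I, r • (⊤ : Submodule R (M ⧸ N)) ≠ ⊤) →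
        I • (⊤ : Submodule R (M ⧸ N)) ≠ ⊤)) := by
  have key : ∀ I : Ideal R, I • (⊤ : Submodule R (M ⧸ N)) = ⊤ ↔ I • (⊤ : Submodule R M) = ⊤ :=
    aux11 N hN
  have keyr : ∀ r : R, r • (⊤ : Submodule R (M ⧸ N)) = ⊤ ↔ r • (⊤ : Submodule R M) = ⊤ := by
    intro r
    rw [← Submodule.ideal_span_singleton_smul, ← Submodule.ideal_span_singleton_smul]
    exact key _
  constructor
  · ext r
    simp only [Set.mem_setOf_eq, not_iff_not]
    exact (keyr r).symm
  · constructor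
    · intro H I hfg hr h
      exact H I hfg (fun r hrI => (keyr r).not.mp (hr r hrI)) ((key I).mp h)
    · intro H I hfg hr h
      exact H I hfg (fun r hrI => (keyr r).not.mpr (hr r hrI)) ((key I).mpr h)
end

section
/- An R-module M satisfies the dual of proper strong Property A if and only if M satisfies the dual of Property A and for each maximal ideal m of R, m ∩ W_R(M) is an ideal of R. -/
open Pointwise

/-- `M` satisfies the dual of proper strong Property A iff `M` satisfies the dual of Property A
and `m ∩ W_R(M)` is an ideal of `R` for every maximal ideal `m` of `R`. -/
theorem stmt14 {R M : Type*} [CommRing R] [AddCommGroup M] [Module R M] :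
    (∀ (n : ℕ) (a : Fin n → R), (∀ i, a i • (⊤ : Submodule R M) ≠ ⊤) →
        Ideal.span (Set.range a) ≠ ⊤ →
        Ideal.span (Set.range a) • (⊤ : Submodule R M) ≠ ⊤) ↔
      ((∀ I : Ideal R, I.FG → (∀ r ∈ I, r • (⊤ : Submodule R M) ≠ ⊤) →
          I • (⊤ : Submodule R M) ≠ ⊤) ∧
        ∀ m : Ideal R, m.IsMaximal →
          ∃ I : Ideal R, (I : Set R) =
            (m : Set R) ∩ {r : R | r • (⊤ : Submodule R M) ≠ ⊤}) := by
  constructor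
  · intro h
    constructor
    · intro I hFG hW
      obtain ⟨n, a, ha⟩ := Submodule.fg_iff_exists_fin_generating_family.mp hFG
      subst ha
      refine h n a (fun i => hW _ (Ideal.subset_span ⟨i, rfl⟩)) ?_
      intro htop
      exact hW 1 ((Ideal.eq_top_iff_one _).mp htop) (by simp)
    · intro m hm
      -- M is nontrivial:
      have hR : (⊥ : Ideal R) ≠ ⊤ := fun hbt => hm.ne_top (eq_top_iff.mpr (hbt ▸ bot_le))
      have hbot : (⊥ : Submodule R M) ≠ ⊤ := by
        have := h 0 Fin.elim0 (fun i => i.elim0) (by simpa using hR)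
        simpa using this
      have hzero : (0:R) ∈ (m : Set R) ∩ {r : R | r • (⊤ : Submodule R M) ≠ ⊤} := by
        refine ⟨m.zero_mem, ?_⟩
        intro h0
        apply hbot
        rw [eq_top_iff]
        intro x _
        have : x ∈ (0 : R) • (⊤ : Submodule R M) := by rw [h0]; exact Submodule.mem_top
        rw [← SetLike.mem_coe, Submodule.coe_pointwise_smul] at this
        obtain ⟨y, -, hy⟩ := this
        simp only [zero_smul] at hy
        simpa [← hy] using Submodule.zero_mem _
      have hadd : ∀ {x y : R}, x ∈ (m : Set R) ∩ {r : R | r • (⊤ : Submodule R M) ≠ ⊤} →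
          y ∈ (m : Set R) ∩ {r : R | r • (⊤ : Submodule R M) ≠ ⊤} →
          x + y ∈ (m : Set R) ∩ {r : R | r • (⊤ : Submodule R M) ≠ ⊤} := by
        rintro x y ⟨hxm, hxW⟩ ⟨hym, hyW⟩
        refine ⟨m.add_mem hxm hym, ?_⟩
        have key := h 2 ![x, y] ?_ ?_
        · intro hc
          apply key
          rw [eq_top_iff]
          calc (⊤ : Submodule R M) = (x + y) • ⊤ := hc.symm
            _ = Ideal.span {x + y} • ⊤ := (Submodule.ideal_span_singleton_smul _ _).symm
            _ ≤ Ideal.span (Set.range ![x, y]) • ⊤ := by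
                refine Submodule.smul_mono_left ?_
                rw [Ideal.span_le, Set.singleton_subset_iff]
                exact Ideal.add_mem _ (Ideal.subset_span ⟨0, rfl⟩)
                  (Ideal.subset_span ⟨1, rfl⟩)
        · intro i
          fin_cases i <;> simpa using (by assumption : _)
        · intro htop
          apply hm.ne_top
          rw [eq_top_iff, ← htop, Ideal.span_le]
          rintro r ⟨i, rfl⟩
          fin_cases i <;> simpa
      have hsmul : ∀ (c : R) {x : R},
          x ∈ (m : Set R) ∩ {r : R | r • (⊤ : Submodule R M) ≠ ⊤} →
          c • x ∈ (m : Set R) ∩ {r : R | r • (⊤ : Submodule R M) ≠ ⊤} := by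
        rintro c x ⟨hxm, hxW⟩
        refine ⟨m.smul_mem c hxm, ?_⟩
        intro hc
        apply hxW
        rw [eq_top_iff]
        intro z _
        have : z ∈ (c • x) • (⊤ : Submodule R M) := by rw [hc]; exact Submodule.mem_top
        rw [← SetLike.mem_coe, Submodule.coe_pointwise_smul] at this
        obtain ⟨y, -, hy⟩ := this
        have : z = x • (c • y) := by
          rw [← hy]
          show (c • x) • y = x • c • y
          rw [smul_eq_mul, mul_comm, mul_smul]
        rw [this]
        exact Submodule.smul_mem_pointwise_smul _ _ _ Submodule.mem_top
      exact ⟨{ carrier := (m : Set R) ∩ {r : R | r • (⊤ : Submodule R M) ≠ ⊤}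
               zero_mem' := hzero
               add_mem' := fun hx hy => hadd hx hy
               smul_mem' := fun c _ hx => hsmul c hx }, rfl⟩
  · rintro ⟨hA, hB⟩ n a ha hspan
    obtain ⟨m, hm, hle⟩ := Ideal.exists_le_maximal _ hspan
    obtain ⟨I, hI⟩ := hB m hm
    refine hA _ (Submodule.fg_span (Set.finite_range a)) ?_
    intro r hr
    have hrI : r ∈ I := by
      refine Ideal.span_le.mpr ?_ hr
      rintro s ⟨i, rfl⟩
      show a i ∈ (I : Set R)
      rw [hI]
      exact ⟨hle (Ideal.subset_span ⟨i, rfl⟩), ha i⟩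
    have := hI ▸ (SetLike.mem_coe.mpr hrI)
    exact this.2
end

section
/- Let M be an R-module with R = U(R) ∪ W_R(M). Then M satisfies the dual of proper strong Property A if and only if M satisfies the dual of Property A. -/
open Pointwise

/-- If `R = U(R) ∪ W_R(M)`, then `M` satisfies the dual of proper strong Property A iff `M`
satisfies the dual of Property A. -/
theorem stmt16 {R M : Type*} [CommRing R] [AddCommGroup M] [Module R M]
    (hR : ∀ r : R, IsUnit r ∨ r • (⊤ : Submodule R M) ≠ ⊤) :
    (∀ (n : ℕ) (a : Fin n → R), (∀ i, a i • (⊤ : Submodule R M) ≠ ⊤) →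
        Ideal.span (Set.range a) ≠ ⊤ →
        Ideal.span (Set.range a) • (⊤ : Submodule R M) ≠ ⊤) ↔
      (∀ I : Ideal R, I.FG → (∀ r ∈ I, r • (⊤ : Submodule R M) ≠ ⊤) →
        I • (⊤ : Submodule R M) ≠ ⊤) := by
  constructor
  · intro h I hI hr
    obtain ⟨s, rfl⟩ := hI
    set a : Fin s.card → R := fun i => (s.equivFin.symm i : R) with ha
    have hrange : Set.range a = (s : Set R) := by
      ext x
      constructor
      · rintro ⟨i, rfl⟩; exact (s.equivFin.symm i).2
      · intro hx; exact ⟨s.equivFin ⟨x, hx⟩, by simp [ha]⟩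
    rw [← hrange]
    apply h
    · intro i
      exact hr _ (Ideal.subset_span ((s.equivFin.symm i).2))
    · intro htop
      have h1 : (1 : R) ∈ Ideal.span (s : Set R) := by
        rw [← hrange, htop]; trivial
      exact hr 1 h1 (by rw [one_smul])
  · intro h n a ha hspan
    refine h _ (Submodule.fg_span (Set.finite_range a)) ?_
    intro r hrI
    rcases hR r with hu | hw
    · exact absurd (Ideal.eq_top_of_isUnit_mem _ hrI hu) hspan
    · exact hw
end

section
/- Let M = R/m₁ ⊕ ... ⊕ R/mₙ where m₁,...,mₙ are maximal ideals of R. Then M satisfies the dual of proper strong Property A if and only if either {m₁,...,mₙ} is the full set of maximal ideals of R, or m₁ = m₂ = ... = mₙ. -/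
/-!
Each `R ⧸ mᵢ` is a simple module with annihilator `mᵢ`, so for an ideal `I` we have
`I • M ≠ M` iff `I ≤ mᵢ` for some `i`; in particular `W_R(M) = m₁ ∪ ⋯ ∪ mₙ`. The property thus
says that a proper finitely generated ideal inside `m₁ ∪ ⋯ ∪ mₙ` lies in a single `mᵢ`. This is
clear if all `mᵢ` coincide, and if every maximal ideal is some `mᵢ` because a proper ideal lies in a
maximal one. Otherwise take a maximal `p` outside the list and, for each `k`, some `mₗ ≠ mₖ`; since
`mₖ` is prime, `p ⊓ mₗ ⊄ mₖ`, and elements `bₖ ∈ (p ⊓ mₗ) \ mₖ` generate an ideal inside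
`p ∩ (m₁ ∪ ⋯ ∪ mₙ)` that lies in no `mₖ`.
-/

open Pointwise

section

variable {R : Type*} [CommRing R]

theorem IsSimpleModule.smul_top_eq_top_iff {M : Type*} [AddCommGroup M] [Module R M]
    [IsSimpleModule R M] (I : Ideal R) :
    I • (⊤ : Submodule R M) = ⊤ ↔ ¬ I ≤ Module.annihilator R M := by
  rw [← Submodule.annihilator_top, Submodule.le_annihilator_iff]
  rcases eq_bot_or_eq_top (I • (⊤ : Submodule R M)) with h | h <;> simp [h]

theorem Submodule.smul_top_pi_eq_top_iff {ι : Type*} [Finite ι] {M : ι → Type*}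
    [∀ i, AddCommGroup (M i)] [∀ i, Module R (M i)] (I : Ideal R) :
    I • (⊤ : Submodule R (Π i, M i)) = ⊤ ↔ ∀ i, I • (⊤ : Submodule R (M i)) = ⊤ := by
  classical
  refine ⟨fun h i => ?_, fun h => ?_⟩
  · have := Submodule.map_smul'' I ⊤ (LinearMap.proj (R := R) (φ := M) i)
    rwa [h, Submodule.map_top, LinearMap.range_eq_top.2 (Function.surjective_eval i),
      eq_comm] at this
  · refine eq_top_iff.2 ((LinearMap.iSup_range_single R M).ge.trans (iSup_le fun i => ?_))
    rw [← Submodule.map_top, ← h i, Submodule.map_smul'']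
    exact smul_mono_right _ le_top

theorem Ideal.smul_top_pi_quotient_ne_top_iff {ι : Type*} [Finite ι] {m : ι → Ideal R}
    (hm : ∀ i, (m i).IsMaximal) (I : Ideal R) :
    I • (⊤ : Submodule R (Π i, R ⧸ m i)) ≠ ⊤ ↔ ∃ i, I ≤ m i := by
  have (i : ι) : IsSimpleModule R (R ⧸ m i) := isSimpleModule_iff_isCoatom.mpr (hm i).out
  simp_rw [Ne, Submodule.smul_top_pi_eq_top_iff, IsSimpleModule.smul_top_eq_top_iff,
    Ideal.annihilator_quotient, not_forall, not_not]

theorem Ideal.smul_top_pi_quotient_ne_top_iff_mem {ι : Type*} [Finite ι] {m : ι → Ideal R}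
    (hm : ∀ i, (m i).IsMaximal) (r : R) :
    r • (⊤ : Submodule R (Π i, R ⧸ m i)) ≠ ⊤ ↔ ∃ i, r ∈ m i := by
  simp_rw [← Submodule.ideal_span_singleton_smul, Ideal.smul_top_pi_quotient_ne_top_iff hm,
    Ideal.span_singleton_le_iff_mem]

theorem Ideal.inf_not_le_of_ne {p q P : Ideal R} (hp : p.IsMaximal) (hq : q.IsMaximal)
    (hP : P.IsPrime) (hpP : p ≠ P) (hqP : q ≠ P) : ¬ p ⊓ q ≤ P := by
  rw [hP.inf_le]
  exact not_or_intro (fun h => hpP (hp.eq_of_le hP.ne_top h))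
    (fun h => hqP (hq.eq_of_le hP.ne_top h))

theorem Ideal.exists_family_mem_notMem_self {ι : Type*} {m : ι → Ideal R}
    (hm : ∀ i, (m i).IsMaximal) {p : Ideal R} (hp : p.IsMaximal) (hpm : ∀ i, p ≠ m i)
    {i₀ j₀ : ι} (hij : m i₀ ≠ m j₀) :
    ∃ b : ι → R, (∀ j, b j ∈ p) ∧ (∀ j, ∃ i, b j ∈ m i) ∧ ∀ i, b i ∉ m i := by
  have hother (k : ι) : ∃ l, m l ≠ m k := by
    by_cases hk : m k = m i₀
    · exact ⟨j₀, hk ▸ hij.symm⟩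
    · exact ⟨i₀, Ne.symm hk⟩
  choose l hl using hother
  have hb (k : ι) : ∃ b ∈ p ⊓ m (l k), b ∉ m k :=
    Set.not_subset.1 (Ideal.inf_not_le_of_ne hp (hm (l k)) (hm k).isPrime (hpm k) (hl k))
  choose b hb hbm using hb
  exact ⟨b, fun j => (hb j).1, fun j => ⟨l j, (hb j).2⟩, hbm⟩

end

/-- Let `M = R/m₁ ⊕ ... ⊕ R/mₙ` with `mᵢ` maximal ideals.  Then `M` satisfies the dual of
proper strong Property A iff either `{m₁, ..., mₙ}` is the full set of maximal ideals of `R`,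
or `m₁ = ... = mₙ`. -/
theorem stmt18 {R : Type*} [CommRing R] {n : ℕ} (hn : 0 < n)
    (m : Fin n → Ideal R) (hm : ∀ i, (m i).IsMaximal) :
    (∀ (k : ℕ) (a : Fin k → R),
        (∀ j, a j • (⊤ : Submodule R (Π i : Fin n, R ⧸ m i)) ≠ ⊤) →
        Ideal.span (Set.range a) ≠ ⊤ →
        Ideal.span (Set.range a) • (⊤ : Submodule R (Π i : Fin n, R ⧸ m i)) ≠ ⊤) ↔
      ((∀ p : Ideal R, p.IsMaximal → ∃ i, p = m i) ∨ ∀ i j, m i = m j) := by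
  simp_rw [Ideal.smul_top_pi_quotient_ne_top_iff_mem hm, Ideal.smul_top_pi_quotient_ne_top_iff hm]
  constructor
  · intro H
    by_contra! ⟨⟨p, hp, hpm⟩, i₀, j₀, hij⟩
    obtain ⟨b, hbp, hbW, hbm⟩ := Ideal.exists_family_mem_notMem_self hm hp hpm hij
    have hspan : Ideal.span (Set.range b) ≤ p := Ideal.span_le.2 (Set.range_subset_iff.2 hbp)
    obtain ⟨i, hi⟩ := H n b hbW (ne_top_of_le_ne_top hp.ne_top hspan)
    exact hbm i (hi (Ideal.subset_span ⟨i, rfl⟩))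
  · rintro (H | H) k a ha hne
    · obtain ⟨p, hp, hle⟩ := Ideal.exists_le_maximal _ hne
      obtain ⟨i, rfl⟩ := H p hp
      exact ⟨i, hle⟩
    · refine ⟨⟨0, hn⟩, Ideal.span_le.2 (Set.range_subset_iff.2 fun j => ?_)⟩
      obtain ⟨i, hi⟩ := ha j
      exact H i _ ▸ hi
end
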